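/- For Pair Matching, no deterministic online algorithm can achieve a competitive ratio less than 2. Formally: for every deterministic online algorithm A : List ℚ → ℚ → Bool and every N ∈ ℕ, there exists an input x₁,…,xₙ of pairwise distinct rationals in [0,1] with n ≥ N such that the number of indices i for which A [x₁,…,x_{i−1}] x_i equals the correct answer for x_i is at most n/2 (while the optimum, answering every item correctly, is n). -/

import Mathlib

/-!
The adversary presents the items `aₖ = 1/(k+3) < 1/2` one at a time. If the algorithm accepts `aₖ`,
its partner `1 - aₖ` never arrives; if it rejects `aₖ`, the partner is presented next. Either way
the answer on `aₖ` is wrong, so every correct answer is on some `1 - aₖ > 1/2`, and these large items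
are injectively paired with small ones. Hence at most half of the answers are correct.
-/

/-- The correct answer for item `i` of a Pair Matching input: `true` ('accept')
iff some other item of the input has matching value `1 − xᵢ`. -/
def pmCorrect (l : List ℚ) (i : Fin l.length) : Bool :=
  decide (∃ j : Fin l.length, j ≠ i ∧ l.get i + l.get j = 1)

open Finset

theorem pmCorrect_eq_decide_one_sub_mem (l : List ℚ) (i : Fin l.length)
    (hi : l.get i + l.get i ≠ 1) : pmCorrect l i = decide (1 - l.get i ∈ l) := by
  rw [pmCorrect, decide_eq_decide, List.mem_iff_get]
  constructor
  · rintro ⟨j, -, hj⟩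
    exact ⟨j, by linarith⟩
  · rintro ⟨j, hj⟩
    exact ⟨j, by rintro rfl; exact hi (by linarith), by linarith⟩

theorem List.Nodup.take_eq_of_get_eq {α : Type*} {l p t : List α} {x : α} (hl : l.Nodup)
    (hpxt : l = p ++ x :: t) (i : Fin l.length) (hi : l.get i = x) : l.take i = p := by
  subst hpxt
  obtain rfl : i = ⟨p.length, by simp⟩ := hl.get_inj_iff.mp (by rw [hi]; simp)
  simp

theorem two_mul_card_filter_half_lt_le {ι : Type*} [Fintype ι] {v : ι → ℚ}
    (hv : Function.Injective v) (hcompl : ∀ i, 1 / 2 < v i → 1 - v i ∈ Set.range v) :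
    2 * #{i | 1 / 2 < v i} ≤ Fintype.card ι := by
  cases isEmpty_or_nonempty ι
  · simp
  have hpartner : ∀ i, 1 / 2 < v i → v (Function.invFun v (1 - v i)) = 1 - v i :=
    fun i hi => Function.invFun_eq (hcompl i hi)
  have hle : #{i | 1 / 2 < v i} ≤ #{i | ¬ 1 / 2 < v i} := by
    refine card_le_card_of_injOn (fun i => Function.invFun v (1 - v i)) ?_ ?_
    · intro i hi
      simp only [coe_filter, mem_univ, true_and, Set.mem_ofPred_eq] at hi ⊢
      rw [hpartner i hi]
      linarith
    · intro i hi j hj hij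
      simp only [coe_filter, mem_univ, true_and, Set.mem_ofPred_eq] at hi hj
      have := congrArg v hij
      simp only [hpartner i hi, hpartner j hj] at this
      exact hv (by linarith)
  have := card_filter_add_card_filter_not (s := univ) (fun i => 1 / 2 < v i)
  rw [card_univ] at this
  omega

def smallItem (k : ℕ) : ℚ := 1 / (k + 3)

theorem smallItem_pos (k : ℕ) : 0 < smallItem k := by
  unfold smallItem; positivity

theorem smallItem_lt_half (k : ℕ) : smallItem k < 1 / 2 := by
  unfold smallItem
  rw [div_lt_div_iff₀ (by positivity) (by norm_num)]
  linarith [(Nat.cast_nonneg k : (0 : ℚ) ≤ k)]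

theorem smallItem_injective : Function.Injective smallItem := by
  intro j k h
  simpa [smallItem] using h

theorem smallItem_ne_one_sub (j k : ℕ) : smallItem j ≠ 1 - smallItem k := by
  linarith [smallItem_lt_half j, smallItem_lt_half k]

def adversaryInput (A : List ℚ → ℚ → Bool) : ℕ → List ℚ
  | 0 => []
  | k + 1 => adversaryInput A k ++
      if A (adversaryInput A k) (smallItem k) then [smallItem k]
      else [smallItem k, 1 - smallItem k]

section
variable (A : List ℚ → ℚ → Bool)

theorem mem_adversaryInput {N : ℕ} {x : ℚ} :
    x ∈ adversaryInput A N ↔ ∃ k < N,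
      x = smallItem k ∨ (A (adversaryInput A k) (smallItem k) = false ∧ x = 1 - smallItem k) := by
  induction N with
  | zero => simp [adversaryInput]
  | succ N ih =>
    rw [adversaryInput, List.mem_append, ih, Nat.exists_lt_succ_right]
    cases A (adversaryInput A N) (smallItem N) <;> simp

theorem le_length_adversaryInput (N : ℕ) : N ≤ (adversaryInput A N).length := by
  induction N with
  | zero => simp
  | succ N ih =>
    rw [adversaryInput, List.length_append]
    split <;> simp <;> omega

theorem adversaryInput_eq_append {k N : ℕ} (hk : k < N) :
    ∃ t, adversaryInput A N = adversaryInput A k ++ smallItem k :: t := by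
  induction N with
  | zero => omega
  | succ N ih =>
    rcases Nat.lt_succ_iff_lt_or_eq.mp hk with hk | rfl
    · obtain ⟨t, ht⟩ := ih hk
      exact ⟨_, by rw [adversaryInput, ht, List.append_assoc, List.cons_append]⟩
    · rw [adversaryInput]
      split
      · exact ⟨[], rfl⟩
      · exact ⟨[1 - smallItem k], rfl⟩

theorem adversaryInput_nodup (N : ℕ) : (adversaryInput A N).Nodup := by
  induction N with
  | zero => simp [adversaryInput]
  | succ N ih =>
    have hsmall : smallItem N ∉ adversaryInput A N := by
      rw [mem_adversaryInput]
      rintro ⟨k, hk, h | ⟨-, h⟩⟩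
      · exact hk.ne' (smallItem_injective h)
      · exact smallItem_ne_one_sub N k h
    have hlarge : 1 - smallItem N ∉ adversaryInput A N := by
      rw [mem_adversaryInput]
      rintro ⟨k, hk, h | ⟨-, h⟩⟩
      · exact smallItem_ne_one_sub k N h.symm
      · exact hk.ne' (smallItem_injective (by linarith))
    rw [adversaryInput]
    split
    · exact ih.append (by simp) (by simpa using hsmall)
    · refine ih.append (by simpa using smallItem_ne_one_sub N N) ?_
      simp [hsmall, hlarge]

theorem one_sub_smallItem_mem_adversaryInput_iff {k N : ℕ} (hk : k < N) :
    1 - smallItem k ∈ adversaryInput A N ↔ A (adversaryInput A k) (smallItem k) = false := by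
  rw [mem_adversaryInput]
  constructor
  · rintro ⟨j, -, h | ⟨hA, h⟩⟩
    · exact absurd h.symm (smallItem_ne_one_sub j k)
    · rwa [smallItem_injective (by linarith : smallItem k = smallItem j)]
  · exact fun hA => ⟨k, hk, Or.inr ⟨hA, rfl⟩⟩

theorem half_lt_get_of_answer_eq_pmCorrect {N : ℕ} (i : Fin (adversaryInput A N).length)
    (hi : A ((adversaryInput A N).take i) ((adversaryInput A N).get i) =
      pmCorrect (adversaryInput A N) i) :
    1 / 2 < (adversaryInput A N).get i := by
  obtain ⟨k, hk, hsmall | ⟨-, hlarge⟩⟩ :=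
    (mem_adversaryInput A).mp (List.get_mem (adversaryInput A N) i)
  · exfalso
    obtain ⟨t, ht⟩ := adversaryInput_eq_append A hk
    rw [(adversaryInput_nodup A N).take_eq_of_get_eq ht i hsmall,
      pmCorrect_eq_decide_one_sub_mem _ _ (by linarith [smallItem_lt_half k]), hsmall] at hi
    simp only [one_sub_smallItem_mem_adversaryInput_iff A hk] at hi
    cases h : A (adversaryInput A k) (smallItem k) <;> simp [h] at hi
  · linarith [smallItem_lt_half k]

theorem mem_adversaryInput_bounds {N : ℕ} {x : ℚ} (hx : x ∈ adversaryInput A N) :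
    0 ≤ x ∧ x ≤ 1 := by
  obtain ⟨k, -, rfl | ⟨-, rfl⟩⟩ := (mem_adversaryInput A).mp hx <;>
    constructor <;> linarith [smallItem_pos k, smallItem_lt_half k]

theorem one_sub_mem_adversaryInput {N : ℕ} {x : ℚ} (hx : x ∈ adversaryInput A N)
    (hlarge : 1 / 2 < x) : 1 - x ∈ adversaryInput A N := by
  obtain ⟨k, hk, rfl | ⟨-, rfl⟩⟩ := (mem_adversaryInput A).mp hx
  · linarith [smallItem_lt_half k]
  · exact (mem_adversaryInput A).mpr ⟨k, hk, Or.inl (sub_sub_cancel 1 _)⟩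

end

/-- For Pair Matching, no deterministic online algorithm achieves a competitive
ratio less than `2`: for every algorithm `A` and every `N` there is an input of
pairwise distinct rationals in `[0,1]` of length `n ≥ N` on which `A` answers
correctly on at most `n/2` items (while the optimum answers all `n` correctly). -/
theorem pm_online_det_lower_bound (A : List ℚ → ℚ → Bool) (N : ℕ) :
    ∃ l : List ℚ,
      l.Nodup ∧ (∀ x ∈ l, 0 ≤ x ∧ x ≤ 1) ∧ N ≤ l.length ∧
      2 * (Finset.univ.filter (fun i : Fin l.length =>
        A (l.take (i : ℕ)) (l.get i) = pmCorrect l i)).card ≤ l.length := by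
  set l := adversaryInput A N
  have hnodup : l.Nodup := adversaryInput_nodup A N
  refine ⟨l, hnodup, fun x => mem_adversaryInput_bounds A, le_length_adversaryInput A N, ?_⟩
  calc 2 * #{i : Fin l.length | A (l.take i) (l.get i) = pmCorrect l i}
      ≤ 2 * #{i : Fin l.length | 1 / 2 < l.get i} := by
        gcongr with i
        exact half_lt_get_of_answer_eq_pmCorrect A i
    _ ≤ Fintype.card (Fin l.length) :=
        two_mul_card_filter_half_lt_le (List.nodup_iff_injective_get.mp hnodup) fun i hi =>
          List.mem_iff_get.mp (one_sub_mem_adversaryInput A (List.get_mem l i) hi)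
    _ = l.length := Fintype.card_fin _
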